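/- Let H : ℝⁿ ⇉ ℝⁿ be a convex process. If the convex cone W is weakly H invariant and the convex cone S is strongly H invariant, then W ∩ S is weakly H invariant and S − W is strongly H invariant. -/

import Mathlib

open Pointwise Set RealInnerProductSpace

namespace ConvexProcessPaper

/-- A convex cone: a nonempty convex set closed under nonnegative scalar multiplication. -/
def IsConvexCone {V : Type*} [AddCommMonoid V] [Module ℝ V] (S : Set V) : Prop :=
  S.Nonempty ∧ Convex ℝ S ∧ ∀ c : ℝ, 0 ≤ c → ∀ x ∈ S, c • x ∈ S

/-- A set is a linear subspace. -/
def IsLinearSubspace {V : Type*} [AddCommGroup V] [Module ℝ V] (S : Set V) : Prop :=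
  ∃ W : Submodule ℝ V, (W : Set V) = S

/-- Set-valued maps from ℝⁿ to ℝⁿ. -/
abbrev SVMap (n : ℕ) := EuclideanSpace ℝ (Fin n) → Set (EuclideanSpace ℝ (Fin n))

variable {n : ℕ}

/-- The graph of a set-valued map. -/
def graph (H : SVMap n) : Set (EuclideanSpace ℝ (Fin n) × EuclideanSpace ℝ (Fin n)) :=
  {p | p.2 ∈ H p.1}

/-- A convex process: a set-valued map whose graph is a convex cone. -/
def IsConvexProcess (H : SVMap n) : Prop := IsConvexCone (graph H)

/-- The domain of a set-valued map. -/
def dom (H : SVMap n) : Set (EuclideanSpace ℝ (Fin n)) := {x | (H x).Nonempty}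

/-- The image of a set-valued map. -/
def im (H : SVMap n) : Set (EuclideanSpace ℝ (Fin n)) := {y | ∃ x, y ∈ H x}

/-- The inverse of a set-valued map: gr(H⁻¹) = {(y,x) : (x,y) ∈ gr(H)}. -/
def invMap (H : SVMap n) : SVMap n := fun y => {x | y ∈ H x}

/-- The image of a set under a set-valued map: H(S) = ⋃_{x ∈ S} H(x). -/
def imSet (H : SVMap n) (S : Set (EuclideanSpace ℝ (Fin n))) :
    Set (EuclideanSpace ℝ (Fin n)) := ⋃ x ∈ S, H x

/-- The reachable set: R(H) = ⋃_{ℓ ≥ 0} H^ℓ({0}). -/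
def reach (H : SVMap n) : Set (EuclideanSpace ℝ (Fin n)) := ⋃ ℓ : ℕ, (imSet H)^[ℓ] {0}

/-- The null-controllable set: N(H) = R(H⁻¹). -/
def nullc (H : SVMap n) : Set (EuclideanSpace ℝ (Fin n)) := reach (invMap H)

/-- The feasible set: states from which an infinite trajectory emanates. -/
def feas (H : SVMap n) : Set (EuclideanSpace ℝ (Fin n)) :=
  {ξ | ∃ x : ℕ → EuclideanSpace ℝ (Fin n), x 0 = ξ ∧ ∀ k, x (k + 1) ∈ H (x k)}

/-- The minimal linear process L₋: gr(L₋) = lin(gr(H)) = gr(H) ∩ (−gr(H)). -/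
def Lminus (H : SVMap n) : SVMap n := fun x => {y | y ∈ H x ∧ -y ∈ H (-x)}

/-- The maximal linear process L₊: gr(L₊) = Lin(gr(H)) = gr(H) − gr(H). -/
def Lplus (H : SVMap n) : SVMap n :=
  fun x => {y | ∃ x₁ y₁ x₂ y₂, y₁ ∈ H x₁ ∧ y₂ ∈ H x₂ ∧ x = x₁ - x₂ ∧ y = y₁ - y₂}

/-- The negative dual process: p ∈ H⁻(q) ⇔ ⟨p,x⟩ ≥ ⟨q,y⟩ for all (x,y) ∈ gr(H). -/
def negDual (H : SVMap n) : SVMap n :=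
  fun q => {p | ∀ x y, y ∈ H x → ⟪q, y⟫ ≤ ⟪p, x⟫}

/-- The positive dual process: p ∈ H⁺(q) ⇔ ⟨p,x⟩ ≤ ⟨q,y⟩ for all (x,y) ∈ gr(H). -/
def posDual (H : SVMap n) : SVMap n :=
  fun q => {p | ∀ x y, y ∈ H x → ⟪p, x⟫ ≤ ⟪q, y⟫}

/-- The negative polar cone of a set. -/
def negPolar (C : Set (EuclideanSpace ℝ (Fin n))) : Set (EuclideanSpace ℝ (Fin n)) :=
  {y | ∀ x ∈ C, ⟪x, y⟫ ≤ 0}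

/-- The positive polar cone of a set. -/
def posPolar (C : Set (EuclideanSpace ℝ (Fin n))) : Set (EuclideanSpace ℝ (Fin n)) :=
  {y | ∀ x ∈ C, 0 ≤ ⟪x, y⟫}

/-- C is weakly H invariant: H(x) ∩ C ≠ ∅ for all x ∈ C. -/
def WeaklyInv (H : SVMap n) (C : Set (EuclideanSpace ℝ (Fin n))) : Prop :=
  ∀ x ∈ C, (H x ∩ C).Nonempty

/-- C is strongly H invariant: H(x) ⊆ C for all x ∈ C. -/
def StronglyInv (H : SVMap n) (C : Set (EuclideanSpace ℝ (Fin n))) : Prop :=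
  ∀ x ∈ C, H x ⊆ C

/-- H is reachable: every feasible state is reachable. -/
def IsReachable (H : SVMap n) : Prop := feas H ⊆ reach H

/-- H is null-controllable: every feasible state is null-controllable. -/
def IsNullControllable (H : SVMap n) : Prop := feas H ⊆ nullc H

theorem IsConvexCone.add_mem {V : Type*} [AddCommMonoid V] [Module ℝ V] {C : Set V}
    (hC : IsConvexCone C) {x y : V} (hx : x ∈ C) (hy : y ∈ C) : x + y ∈ C := by
  have hmid : (1 / 2 : ℝ) • x + (1 / 2 : ℝ) • y ∈ C :=
    hC.2.1 hx hy (by norm_num) (by norm_num) (by norm_num)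
  have h2 := hC.2.2 2 (by norm_num) _ hmid
  rwa [smul_add, smul_smul, smul_smul, show (2 : ℝ) * (1 / 2) = 1 by norm_num, one_smul,
    one_smul] at h2

theorem IsConvexProcess.add_mem {H : SVMap n} (hH : IsConvexProcess H)
    {x₁ x₂ y₁ y₂ : EuclideanSpace ℝ (Fin n)} (h₁ : y₁ ∈ H x₁) (h₂ : y₂ ∈ H x₂) :
    y₁ + y₂ ∈ H (x₁ + x₂) :=
  IsConvexCone.add_mem hH (x := (x₁, y₁)) (y := (x₂, y₂)) h₁ h₂

theorem WeaklyInv.inter_of_stronglyInv {H : SVMap n} {W S : Set (EuclideanSpace ℝ (Fin n))}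
    (hW : WeaklyInv H W) (hS : StronglyInv H S) : WeaklyInv H (W ∩ S) := by
  rintro x ⟨hxW, hxS⟩
  obtain ⟨y, hyH, hyW⟩ := hW x hxW
  exact ⟨y, hyH, hyW, hS x hxS hyH⟩

theorem StronglyInv.sub_of_weaklyInv {H : SVMap n} (hH : IsConvexProcess H)
    {W S : Set (EuclideanSpace ℝ (Fin n))} (hS : StronglyInv H S) (hW : WeaklyInv H W) :
    StronglyInv H (S - W) := by
  rintro _ ⟨s, hs, w, hw, rfl⟩ v hv
  obtain ⟨y, hyH, hyW⟩ := hW w hw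
  have hvy : v + y ∈ H s := by simpa only [sub_add_cancel] using hH.add_mem hv hyH
  exact ⟨v + y, hS s hs hvy, y, hyW, add_sub_cancel_right v y⟩

theorem inter_weak_sub_strong_general {n : ℕ} (H : SVMap n) (hH : IsConvexProcess H)
    (W S : Set (EuclideanSpace ℝ (Fin n)))
    (hW : WeaklyInv H W) (hS : StronglyInv H S) :
    WeaklyInv H (W ∩ S) ∧ StronglyInv H (S - W) :=
  ⟨hW.inter_of_stronglyInv hS, hS.sub_of_weaklyInv hH hW⟩

/-- W ∩ S is weakly invariant and S − W is strongly invariant. -/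
theorem inter_weak_sub_strong {n : ℕ} (H : SVMap n) (hH : IsConvexProcess H)
    (W S : Set (EuclideanSpace ℝ (Fin n))) (hWc : IsConvexCone W) (hSc : IsConvexCone S)
    (hW : WeaklyInv H W) (hS : StronglyInv H S) :
    WeaklyInv H (W ∩ S) ∧ StronglyInv H (S - W) :=
  inter_weak_sub_strong_general H hH W S hW hS

end ConvexProcessPaper
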